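/- arXiv:1112.5948 — 2 statements merged into one kernel-verified Lean document; each statement's English description precedes it below -/
import Mathlib

section
/- Suppose θ : [T, ∞) → ℝ (T > 2π) is differentiable, strictly increasing, with θ'(t) = (1/2)ln(t/(2π)) + O(1/t), and t_ν, t_{ν+1} ∈ [T, 2T] satisfy θ(t_ν) = πν and θ(t_{ν+1}) = π(ν+1). Then t_{ν+1} − t_ν = 2π/ln(t_ν/(2π)) + O(1/(t_ν ln² t_ν)). -/
open Real

set_option maxHeartbeats 1000000 in
theorem stmt8 (C : ℝ) (hC : 0 < C) :
    ∃ A : ℝ, ∀ (T : ℝ) (θ : ℝ → ℝ) (ν : ℤ) (t1 t2 : ℝ),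
      2 * π * Real.exp 1 < T →
      (∀ t : ℝ, T ≤ t → DifferentiableAt ℝ θ t) →
      StrictMonoOn θ (Set.Ici T) →
      (∀ t : ℝ, T ≤ t → |deriv θ t - Real.log (t / (2 * π)) / 2| ≤ C / t) →
      t1 ∈ Set.Icc T (2 * T) → t2 ∈ Set.Icc T (2 * T) →
      θ t1 = π * ν → θ t2 = π * (ν + 1) →
      |t2 - t1 - 2 * π / Real.log (t1 / (2 * π))| ≤ A / (t1 * (Real.log t1) ^ 2) := by
  refine ⟨72 * π * (2 * π + C) + (4 * C + 2 * π) * (8 * C) * (Real.log (8 * C)) ^ 2, ?_⟩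
  intro T θ ν t1 t2 hT hdiff hmono hbound ht1 ht2 hθ1 hθ2
  have hπ : (0:ℝ) < π := Real.pi_pos
  have h2π : (0:ℝ) < 2 * π := by linarith
  have hTpos : 0 < T := lt_trans (by positivity) hT
  have ht1T : T ≤ t1 := ht1.1
  have ht1pos : 0 < t1 := lt_of_lt_of_le hTpos ht1T
  have ht1big : 2 * π * Real.exp 1 < t1 := lt_of_lt_of_le hT ht1T
  have hLLgt : Real.log (2 * π) + 1 < Real.log t1 := by
    have h := Real.log_lt_log (by positivity) ht1big
    rwa [Real.log_mul (by positivity) (Real.exp_ne_zero 1), Real.log_exp] at h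
  have hlog2π_nonneg : 0 ≤ Real.log (2 * π) := Real.log_nonneg (by nlinarith [Real.pi_gt_three])
  have hlog2π_le : Real.log (2 * π) ≤ 2 := by
    rw [Real.log_le_iff_le_exp h2π]
    have h1 : (2.7:ℝ) < Real.exp 1 := by linarith [Real.exp_one_gt_d9]
    have h2 : Real.exp 2 = Real.exp 1 * Real.exp 1 := by
      rw [← Real.exp_add]; norm_num
    have h3 : (7.29:ℝ) ≤ Real.exp 2 := by rw [h2]; nlinarith [h1]
    have hπlt : π < 3.15 := by linarith [Real.pi_lt_d2]
    linarith
  have hLLpos : 0 < Real.log t1 := by linarith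
  set L := Real.log (t1 / (2 * π)) with hLdef
  set LL := Real.log t1 with hLLdef
  have hLsplit : L = LL - Real.log (2 * π) := by
    rw [hLdef, hLLdef, Real.log_div (ne_of_gt ht1pos) (ne_of_gt h2π)]
  have hL1 : 1 < L := by rw [hLsplit]; linarith
  have hLpos : 0 < L := by linarith
  have hLL3 : LL ≤ 3 * L := by rw [hLsplit]; linarith
  have h12 : t1 < t2 := by
    rcases lt_trichotomy t1 t2 with h | h | h
    · exact h
    · exfalso
      rw [h, hθ2] at hθ1
      nlinarith [hθ1]
    · exfalso
      have h' := hmono (Set.mem_Ici.mpr ht2.1) (Set.mem_Ici.mpr ht1T) h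
      rw [hθ1, hθ2] at h'
      nlinarith
  have hθdiff : θ t2 - θ t1 = π := by rw [hθ1, hθ2]; push_cast; ring
  have hcont : ContinuousOn θ (Set.Icc t1 t2) := fun t ht =>
    ((hdiff t (le_trans ht1T ht.1)).continuousAt).continuousWithinAt
  have hdiffOn : DifferentiableOn ℝ θ (Set.Ioo t1 t2) := fun x hx =>
    (hdiff x (le_trans ht1T (le_of_lt hx.1))).differentiableWithinAt
  obtain ⟨ξ, hξ, hξd⟩ := exists_deriv_eq_slope θ h12 hcont hdiffOn
  set D := deriv θ ξ with hDdef
  have hξt1 : t1 < ξ := hξ.1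
  have hξt2 : ξ < t2 := hξ.2
  have hξT : T ≤ ξ := le_trans ht1T (le_of_lt hξt1)
  have hξpos : 0 < ξ := lt_trans ht1pos hξt1
  have hspos : 0 < t2 - t1 := by linarith
  have hDs : D * (t2 - t1) = π := by
    rw [hξd, hθdiff, div_mul_cancel₀ _ (ne_of_gt hspos)]
  have hbξ := hbound ξ hξT
  rw [abs_le] at hbξ
  have f3 : C / ξ ≤ C / t1 := div_le_div_of_nonneg_left hC.le ht1pos hξt1.le
  have f4 : L ≤ Real.log (ξ / (2 * π)) := by
    rw [hLdef]
    exact Real.log_le_log (by positivity)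
      ((div_le_div_iff_of_pos_right h2π).mpr hξt1.le)
  have f5 : Real.log (ξ / (2 * π)) ≤ L + (ξ - t1) / t1 := by
    have h1 : Real.log (ξ / (2 * π)) = Real.log ξ - Real.log (2 * π) :=
      Real.log_div (ne_of_gt hξpos) (ne_of_gt h2π)
    have h2 : Real.log ξ - LL = Real.log (ξ / t1) := by
      rw [hLLdef]; exact (Real.log_div (ne_of_gt hξpos) (ne_of_gt ht1pos)).symm
    have h3 : Real.log (ξ / t1) ≤ ξ / t1 - 1 :=
      Real.log_le_sub_one_of_pos (by positivity)
    have h4 : ξ / t1 - 1 = (ξ - t1) / t1 := by field_simp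
    rw [h1, hLsplit]
    linarith
  by_cases hTC : 4 * C ≤ T
  · -- main case
    have hCξ4 : C / ξ ≤ 1 / 4 := by
      have h4C : 4 * C ≤ ξ := le_trans hTC hξT
      have h' : C / ξ ≤ C / (4 * C) :=
        div_le_div_of_nonneg_left hC.le (by positivity) h4C
      have he : C / (4 * C) = 1 / 4 := by
        field_simp
      linarith [h', he]
    have hD4 : L / 4 ≤ D := by linarith [hbξ.1, hDdef]
    have hsL : (t2 - t1) * L ≤ 4 * π := by
      nlinarith [mul_le_mul_of_nonneg_right hD4 hspos.le]
    have hs4π : t2 - t1 ≤ 4 * π / L := by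
      rw [le_div_iff₀ hLpos]; exact hsL
    have hs4 : t2 - t1 ≤ 4 * π := by nlinarith
    have f6 : (ξ - t1) / t1 ≤ 4 * π / t1 :=
      (div_le_div_iff_of_pos_right ht1pos).mpr (by linarith)
    have f7 : (2 * C + 4 * π) / t1 = 2 * (C / t1) + 4 * π / t1 := by ring
    have f8 : (0:ℝ) ≤ 4 * π / t1 := by positivity
    have habsD : |L - 2 * D| ≤ (2 * C + 4 * π) / t1 := by
      rw [abs_le]
      exact ⟨by linarith [hbξ.2, hDdef], by linarith [hbξ.1, hDdef]⟩
    have hsub : (t2 - t1 - 2 * π / L) * L = (t2 - t1) * (L - 2 * D) := by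
      have hc : 2 * π / L * L = 2 * π := div_mul_cancel₀ _ (ne_of_gt hLpos)
      linear_combination 2 * hDs - hc
    have hsub2 : t2 - t1 - 2 * π / L = (t2 - t1) * (L - 2 * D) / L :=
      (eq_div_iff (ne_of_gt hLpos)).mpr hsub
    rw [hsub2, abs_div, abs_of_pos hLpos, abs_mul, abs_of_pos hspos]
    have step1 : (t2 - t1) * |L - 2 * D| ≤ (4 * π / L) * ((2 * C + 4 * π) / t1) :=
      mul_le_mul hs4π habsD (abs_nonneg _) (by positivity)
    have step2 : (t2 - t1) * |L - 2 * D| / L ≤ ((4 * π / L) * ((2 * C + 4 * π) / t1)) / L :=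
      (div_le_div_iff_of_pos_right hLpos).mpr step1
    have step3 : ((4 * π / L) * ((2 * C + 4 * π) / t1)) / L
        = (8 * π * C + 16 * π ^ 2) / (t1 * L ^ 2) := by
      field_simp
      ring
    have hfin : (8 * π * C + 16 * π ^ 2) / (t1 * L ^ 2)
        ≤ (72 * π * (2 * π + C) + (4 * C + 2 * π) * (8 * C) * (Real.log (8 * C)) ^ 2)
          / (t1 * LL ^ 2) := by
      rw [div_le_div_iff₀ (by positivity) (by positivity)]
      have h9 : LL ^ 2 ≤ 9 * L ^ 2 := by
        calc LL ^ 2 ≤ (3 * L) ^ 2 := pow_le_pow_left₀ hLLpos.le hLL3 2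
          _ = 9 * L ^ 2 := by ring
      have key := mul_le_mul_of_nonneg_left h9
        (by positivity : (0:ℝ) ≤ (8 * π * C + 16 * π ^ 2) * t1)
      have hnn : (0:ℝ) ≤ (4 * C + 2 * π) * (8 * C) * (Real.log (8 * C)) ^ 2 * (t1 * L ^ 2) := by
        positivity
      linarith [key, hnn]
    linarith [step2, step3, hfin]
  · -- degenerate case : T < 4C
    push_neg at hTC
    have h2πL : 2 * π / L ≤ 2 * π := div_le_self (by positivity) hL1.le
    have h2πLpos : 0 < 2 * π / L := by positivity
    have hd : t2 - t1 ≤ T := by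
      have := ht2.2; linarith
    have hub : |t2 - t1 - 2 * π / L| ≤ 4 * C + 2 * π := by
      rw [abs_le]
      constructor <;> linarith
    have ht18 : t1 ≤ 8 * C := by
      have := ht1.2; linarith
    have hlog8 : LL ≤ Real.log (8 * C) := by
      rw [hLLdef]; exact Real.log_le_log ht1pos ht18
    have hLL2 : LL ^ 2 ≤ (Real.log (8 * C)) ^ 2 :=
      pow_le_pow_left₀ hLLpos.le hlog8 2
    have hfin : 4 * C + 2 * π ≤
        (72 * π * (2 * π + C) + (4 * C + 2 * π) * (8 * C) * (Real.log (8 * C)) ^ 2)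
          / (t1 * LL ^ 2) := by
      rw [le_div_iff₀ (by positivity)]
      have k1 : (4 * C + 2 * π) * (t1 * LL ^ 2)
          ≤ (4 * C + 2 * π) * ((8 * C) * (Real.log (8 * C)) ^ 2) :=
        mul_le_mul_of_nonneg_left
          (mul_le_mul ht18 hLL2 (sq_nonneg _) (by positivity)) (by positivity)
      have k2 : (0:ℝ) < 72 * π * (2 * π + C) := by positivity
      linarith [k1, k2]
    linarith [hub, hfin]
end

section
/- Let θ₁(t) = (t/2)ln(t/(2π)) − t/2 − π/8, and suppose θ : (0,∞) → ℝ satisfies |θ(t) − θ₁(t)| ≤ C/t for t ≥ T with T > 2π. If t̃_ν ∈ [T, 2T] satisfies θ(t̃_ν) = πν/2 and g_ν satisfies θ₁(g_ν) = πν/2 with g_ν ∈ [T/2, 4T], then |t̃_ν − g_ν| = O(1/(T ln T)). -/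
open Real

noncomputable def theta1 (t : ℝ) : ℝ := t / 2 * Real.log (t / (2 * π)) - t / 2 - π / 8

lemma theta1_hasDerivAt {t : ℝ} (ht : 0 < t) :
    HasDerivAt theta1 (Real.log (t / (2 * π)) / 2) t := by
  have hpi : (0:ℝ) < π := Real.pi_pos
  have h1 : HasDerivAt (fun x : ℝ => x / (2 * π)) (1 / (2 * π)) t := by
    simpa using (hasDerivAt_id t).div_const (2 * π)
  have h2 : HasDerivAt (fun x : ℝ => Real.log (x / (2 * π)))
      (1 / (2 * π) / (t / (2 * π))) t := h1.log (by positivity)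
  have h3 : HasDerivAt (fun x : ℝ => x / 2) (1 / 2) t := by
    simpa using (hasDerivAt_id t).div_const 2
  have h4 : HasDerivAt theta1
      (1 / 2 * Real.log (t / (2 * π)) + t / 2 * (1 / (2 * π) / (t / (2 * π))) - 1 / 2) t := by
    exact ((h3.mul h2).sub h3).sub_const (π / 8)
  convert h4 using 1
  field_simp
  ring

theorem stmt9 (C : ℝ) (hC : 0 < C) :
    ∃ A T₀ : ℝ, 4 * π < T₀ ∧
      ∀ (T : ℝ), T₀ ≤ T → ∀ (θ : ℝ → ℝ) (ν : ℕ) (tt g : ℝ),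
        (∀ t : ℝ, T ≤ t → |θ t - theta1 t| ≤ C / t) →
        tt ∈ Set.Icc T (2 * T) → g ∈ Set.Icc (T / 2) (4 * T) →
        θ tt = π * ν / 2 → theta1 g = π * ν / 2 →
        |tt - g| ≤ A / (T * Real.log T) := by
  have hpi : (0:ℝ) < π := Real.pi_pos
  have hpilt : π < 3.15 := by
    have := Real.pi_lt_d2
    linarith
  refine ⟨4 * C, 160, by nlinarith, ?_⟩
  intro T hT θ ν tt g hθ htt hg htte hge
  have hT0 : (0:ℝ) < T := by linarith
  have hlogT : 1 < Real.log T := by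
    have : Real.exp 1 < T := by
      have := Real.exp_one_lt_d9
      linarith
    calc 1 = Real.log (Real.exp 1) := (Real.log_exp 1).symm
    _ < Real.log T := Real.log_lt_log (Real.exp_pos 1) this
  set m : ℝ := Real.log (T / (4 * π)) / 2 with hm
  have h16pi : 16 * π ^ 2 < T := by nlinarith
  have hmlog : Real.log T / 4 ≤ m := by
    rw [hm, Real.log_div (by positivity) (by positivity)]
    have h2 : Real.log (4 * π) * 2 ≤ Real.log T := by
      have : Real.log ((4 * π) ^ 2) ≤ Real.log T :=
        Real.log_le_log (by positivity) (by nlinarith)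
      rw [Real.log_pow] at this; push_cast at this; linarith
    linarith
  have hmpos : 0 < m := by linarith
  -- monotonicity of F = theta1 - m * id on [T/2, 4T]
  have hmono : MonotoneOn (fun t => theta1 t - m * t) (Set.Icc (T / 2) (4 * T)) := by
    apply monotoneOn_of_deriv_nonneg (convex_Icc _ _)
    · apply ContinuousOn.sub _ (by fun_prop)
      intro x hx
      exact ((theta1_hasDerivAt (by simp at hx; linarith [hx.1])).continuousAt).continuousWithinAt
    · intro x hx
      rw [interior_Icc] at hx
      exact (((theta1_hasDerivAt (by linarith [hx.1])).sub
        ((hasDerivAt_id x).const_mul m)).differentiableAt).differentiableWithinAt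
    · intro x hx
      rw [interior_Icc] at hx
      have hx1 : T / 2 < x := hx.1
      have hxpos : 0 < x := by linarith
      have hd : HasDerivAt (fun t => theta1 t - m * t)
          (Real.log (x / (2 * π)) / 2 - m * 1) x :=
        (theta1_hasDerivAt hxpos).sub ((hasDerivAt_id x).const_mul m)
      rw [hd.deriv]
      have : Real.log (T / (4 * π)) ≤ Real.log (x / (2 * π)) := by
        apply Real.log_le_log (by positivity)
        rw [div_le_div_iff₀ (by positivity) (by positivity)]
        nlinarith
      rw [hm]; linarith
  -- key slope estimate
  have key : ∀ a b, a ∈ Set.Icc (T / 2) (4 * T) → b ∈ Set.Icc (T / 2) (4 * T) → a ≤ b →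
      m * (b - a) ≤ theta1 b - theta1 a := by
    intro a b ha hb hab
    have := hmono ha hb hab
    simp only at this
    nlinarith
  have httI : tt ∈ Set.Icc (T / 2) (4 * T) :=
    ⟨by linarith [htt.1], by linarith [htt.2]⟩
  have hbound : |theta1 tt - theta1 g| ≤ C / T := by
    have h1 := hθ tt htt.1
    rw [htte, ← hge] at h1
    calc |theta1 tt - theta1 g| = |theta1 g - theta1 tt| := abs_sub_comm _ _
      _ ≤ C / tt := h1
      _ ≤ C / T := by
        apply div_le_div_of_nonneg_left hC.le hT0 htt.1
  have hsep : m * |tt - g| ≤ C / T := by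
    rcases le_total tt g with h | h
    · have := key tt g httI hg h
      have habs : |tt - g| = g - tt := by
        rw [abs_sub_comm]; exact abs_of_nonneg (by linarith)
      rw [habs]
      calc m * (g - tt) = m * (g - tt) := rfl
        _ ≤ theta1 g - theta1 tt := this
        _ ≤ |theta1 g - theta1 tt| := le_abs_self _
        _ = |theta1 tt - theta1 g| := abs_sub_comm _ _
        _ ≤ C / T := hbound
    · have := key g tt hg httI h
      calc m * |tt - g| = m * (tt - g) := by rw [abs_of_nonneg (by linarith)]
        _ ≤ theta1 tt - theta1 g := this
        _ ≤ |theta1 tt - theta1 g| := le_abs_self _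
        _ ≤ C / T := hbound
  have hmq : Real.log T / 4 * |tt - g| ≤ C / T :=
    le_trans (by nlinarith [abs_nonneg (tt - g)]) hsep
  rw [le_div_iff₀ hT0] at hmq
  rw [le_div_iff₀ (by positivity)]
  nlinarith [abs_nonneg (tt - g)]
end
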